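/- arXiv:2409.19812 — 11 statements merged into one kernel-verified Lean document; each statement's English description precedes it below -/
import Mathlib

section
/- Let h : [0,∞) → [0,∞] be a decreasing function with ∫₀¹ h(x) dx ≤ 1 and h(x) = 0 for x > 1 (a p-to-e calibrator). If P is a p-variable, then E := h(P) is an e-variable, i.e., E[h(P)] ≤ 1. -/
open MeasureTheory
open scoped ENNReal

/-- Layer cake formula for `ℝ≥0∞`-valued functions. -/
lemma layercake_ennreal {Ω : Type*} [MeasurableSpace Ω] (μ : Measure Ω) [SFinite μ]
    (f : Ω → ℝ≥0∞) (hf : Measurable f) :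
    ∫⁻ ω, f ω ∂μ = ∫⁻ t in Set.Ioi (0:ℝ), μ {ω | ENNReal.ofReal t < f ω} := by
  have key : ∀ c : ℝ≥0∞, (volume.restrict (Set.Ioi (0:ℝ))) {t | ENNReal.ofReal t < c} = c := by
    intro c
    rcases eq_or_ne c ∞ with rfl | hc
    · have : {t : ℝ | ENNReal.ofReal t < ∞} = Set.univ := by
        ext t; simp [ENNReal.ofReal_lt_top]
      rw [this]
      simp [Measure.restrict_apply, Real.volume_Ioi]
    · have hset : Set.Ioi (0:ℝ) ∩ {t | ENNReal.ofReal t < c} = Set.Ioo 0 c.toReal := by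
        ext t
        simp only [Set.mem_inter_iff, Set.mem_Ioi, Set.mem_setOf_eq, Set.mem_Ioo]
        constructor
        · rintro ⟨ht, hlt⟩
          exact ⟨ht, (ENNReal.ofReal_lt_iff_lt_toReal ht.le hc).mp hlt⟩
        · rintro ⟨ht, hlt⟩
          exact ⟨ht, (ENNReal.ofReal_lt_iff_lt_toReal ht.le hc).mpr hlt⟩
      rw [Measure.restrict_apply' measurableSet_Ioi, Set.inter_comm, hset, Real.volume_Ioo]
      simp [ENNReal.ofReal_toReal hc]
  have meas_s : MeasurableSet {p : Ω × ℝ | ENNReal.ofReal p.2 < f p.1} :=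
    measurableSet_lt (ENNReal.measurable_ofReal.comp measurable_snd) (hf.comp measurable_fst)
  calc ∫⁻ ω, f ω ∂μ
      = ∫⁻ ω, (volume.restrict (Set.Ioi (0:ℝ))) {t | ENNReal.ofReal t < f ω} ∂μ := by
        simp_rw [key]
    _ = ∫⁻ ω, (∫⁻ t in Set.Ioi (0:ℝ),
          {p : Ω × ℝ | ENNReal.ofReal p.2 < f p.1}.indicator 1 (ω, t)) ∂μ := by
        refine lintegral_congr fun ω => ?_
        rw [← lintegral_indicator_one]
        · refine lintegral_congr fun t => ?_
          rfl
        · exact measurableSet_lt ENNReal.measurable_ofReal measurable_const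
    _ = ∫⁻ t in Set.Ioi (0:ℝ),
          ∫⁻ ω, {p : Ω × ℝ | ENNReal.ofReal p.2 < f p.1}.indicator 1 (ω, t) ∂μ := by
        refine lintegral_lintegral_swap ?_
        exact ((measurable_one.indicator meas_s).comp measurable_id).aemeasurable
    _ = ∫⁻ t in Set.Ioi (0:ℝ), μ {ω | ENNReal.ofReal t < f ω} := by
        refine lintegral_congr fun t => ?_
        rw [← lintegral_indicator_one]
        · rfl
        · exact measurableSet_lt measurable_const hf

/-- If `h` is a p-to-e calibrator (decreasing, `∫₀¹ h ≤ 1`, vanishing on `(1,∞)`) and `X` is a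
p-variable, then `h ∘ X` is an e-variable: `E[h(X)] ≤ 1`. -/
theorem p_to_e_calibration {Ω : Type*} [MeasurableSpace Ω] (P : Measure Ω)
    [IsProbabilityMeasure P]
    (h : ℝ → ℝ≥0∞) (hanti : Antitone h)
    (hint : ∫⁻ x in Set.Ioo (0:ℝ) 1, h x ≤ 1)
    (hzero : ∀ x : ℝ, 1 < x → h x = 0)
    (X : Ω → ℝ) (hX : Measurable X) (hXnn : ∀ ω, 0 ≤ X ω)
    (hp : ∀ t : ℝ, 0 ≤ t → t ≤ 1 → P {ω | X ω ≤ t} ≤ ENNReal.ofReal t) :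
    ∫⁻ ω, h (X ω) ∂P ≤ 1 := by
  have hmeas : Measurable h := Antitone.measurable hanti
  rw [layercake_ennreal P (fun ω => h (X ω)) (hmeas.comp hX)]
  have key : ∀ t : ℝ, 0 < t →
      P {ω | ENNReal.ofReal t < h (X ω)} ≤
        (volume.restrict (Set.Ioo (0:ℝ) 1)) {x | ENNReal.ofReal t < h x} := by
    intro t ht
    set s : ℝ≥0∞ := ENNReal.ofReal t with hs
    have hspos : 0 < s := ENNReal.ofReal_pos.mpr ht
    set A : Set ℝ := {x | s < h x} with hA
    have hAle : ∀ x ∈ A ∩ Set.Ici 0, x ≤ 1 := by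
      rintro x ⟨hxA, -⟩
      by_contra hx1
      push_neg at hx1
      have := hzero x hx1
      rw [Set.mem_setOf_eq, this] at hxA
      exact absurd hxA (not_lt.mpr hspos.le).elim
    rcases Set.eq_empty_or_nonempty (A ∩ Set.Ici 0) with hemp | hne
    · have : {ω | ENNReal.ofReal t < h (X ω)} = ∅ := by
        ext ω
        simp only [Set.mem_setOf_eq, Set.mem_empty_iff_false, iff_false]
        intro hlt
        exact Set.eq_empty_iff_forall_notMem.mp hemp (X ω) ⟨hlt, hXnn ω⟩
      rw [this]
      simp
    · set c : ℝ := sSup (A ∩ Set.Ici 0) with hc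
      have hbdd : BddAbove (A ∩ Set.Ici 0) := ⟨1, fun x hx => hAle x hx⟩
      have hc1 : c ≤ 1 := csSup_le hne (fun x hx => hAle x hx)
      obtain ⟨x₀, hx₀⟩ := id hne
      have hc0 : 0 ≤ c := le_csSup hbdd hx₀ |>.trans' hx₀.2
      have hsub : {ω | ENNReal.ofReal t < h (X ω)} ⊆ {ω | X ω ≤ c} := by
        intro ω hω
        exact le_csSup hbdd ⟨hω, hXnn ω⟩
      have h1 : P {ω | ENNReal.ofReal t < h (X ω)} ≤ ENNReal.ofReal c :=
        (measure_mono hsub).trans (hp c hc0 hc1)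
      have h2 : Set.Ioo 0 c ⊆ {x | ENNReal.ofReal t < h x} ∩ Set.Ioo 0 1 := by
        rintro x ⟨hx0, hxc⟩
        obtain ⟨y, hy, hxy⟩ := exists_lt_of_lt_csSup hne hxc
        exact ⟨lt_of_lt_of_le hy.1 (hanti hxy.le), hx0, lt_of_lt_of_le hxc hc1⟩
      have h3 : ENNReal.ofReal c ≤
          (volume.restrict (Set.Ioo (0:ℝ) 1)) {x | ENNReal.ofReal t < h x} := by
        rw [Measure.restrict_apply (measurableSet_lt measurable_const hmeas)]
        calc ENNReal.ofReal c = volume (Set.Ioo (0:ℝ) c) := by rw [Real.volume_Ioo]; simp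
          _ ≤ _ := measure_mono h2
      exact h1.trans h3
  calc ∫⁻ t in Set.Ioi (0:ℝ), P {ω | ENNReal.ofReal t < h (X ω)}
      ≤ ∫⁻ t in Set.Ioi (0:ℝ),
          (volume.restrict (Set.Ioo (0:ℝ) 1)) {x | ENNReal.ofReal t < h x} := by
        refine lintegral_mono_ae ?_
        filter_upwards [self_mem_ae_restrict (measurableSet_Ioi : MeasurableSet (Set.Ioi (0:ℝ)))]
          with t ht
        exact key t ht
    _ = ∫⁻ x in Set.Ioo (0:ℝ) 1, h x :=
        (layercake_ennreal (volume.restrict (Set.Ioo (0:ℝ) 1)) h hmeas).symm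
    _ ≤ 1 := hint
end

section
/- Let h be a p-to-e calibrator (decreasing, ∫₀¹ h ≤ 1, h = 0 on (1,∞)). If P₁,…,P_K are compound p-variables for (P₁,…,P_K) under an atomless universe P, then h(P₁),…,h(P_K) are compound e-variables: for every P ∈ P, Σ_{k : P ∈ P_k} E^P[h(P_k)] ≤ K. -/
/-!
An antitone calibrator `h` vanishing beyond `1` has superlevel sets `{h > c}` that are initial
segments of `(0, 1]` up to a point `s = λ({h > c} ∩ (0, 1)) ≤ 1`. Hence
`Σ_k P(h(P_k) > c) ≤ Σ_k P(P_k ≤ s) ≤ K s`, where the compound bound is extended from `(0, 1)`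
to `s ∈ [0, 1]` by right-continuity and by the total mass `≤ K`. Integrating over the level `c`
(layer cake) gives `Σ_k E[h(P_k)] ≤ K ∫₀¹ h ≤ K`.
-/

open MeasureTheory
open scoped ENNReal
open scoped Classical

open Set

lemma volume_Ioi_inter_setOf_ofReal_lt (c : ℝ≥0∞) :
    volume (Ioi (0 : ℝ) ∩ {t | ENNReal.ofReal t < c}) = c := by
  rcases eq_or_ne c ∞ with rfl | hc
  · simp [ENNReal.ofReal_lt_top]
  · have : Ioi (0 : ℝ) ∩ {t | ENNReal.ofReal t < c} = Ioo 0 c.toReal := by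
      ext t
      simp only [mem_inter_iff, mem_Ioi, mem_ofPred_eq, mem_Ioo, and_congr_right_iff]
      exact fun ht => ENNReal.ofReal_lt_iff_lt_toReal ht.le hc
    rw [this, Real.volume_Ioo, sub_zero, ENNReal.ofReal_toReal hc]

lemma lintegral_eq_lintegral_meas_ofReal_lt {α : Type*} [MeasurableSpace α] (μ : Measure α)
    [SFinite μ] {g : α → ℝ≥0∞} (hg : Measurable g) :
    ∫⁻ a, g a ∂μ = ∫⁻ t in Ioi 0, μ {a | ENNReal.ofReal t < g a} := by
  have hslice : ∀ a, ∫⁻ t in Ioi 0, {t : ℝ | ENNReal.ofReal t < g a}.indicator 1 t = g a := by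
    intro a
    have hm : MeasurableSet {t : ℝ | ENNReal.ofReal t < g a} :=
      ENNReal.measurable_ofReal measurableSet_Iio
    rw [lintegral_indicator_one hm, Measure.restrict_apply hm, inter_comm,
      volume_Ioi_inter_setOf_ofReal_lt]
  have hmeas : AEMeasurable (Function.uncurry fun a (t : ℝ) =>
      {t : ℝ | ENNReal.ofReal t < g a}.indicator (1 : ℝ → ℝ≥0∞) t)
      (μ.prod (volume.restrict (Ioi 0))) := by
    refine Measurable.aemeasurable (measurable_const.indicator ?_)
    exact measurableSet_lt (ENNReal.measurable_ofReal.comp measurable_snd) (hg.comp measurable_fst)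
  calc ∫⁻ a, g a ∂μ
      = ∫⁻ a, (∫⁻ t in Ioi (0 : ℝ), {t : ℝ | ENNReal.ofReal t < g a}.indicator 1 t) ∂μ := by
        simp_rw [hslice]
    _ = ∫⁻ t in Ioi (0 : ℝ), ∫⁻ a, {t : ℝ | ENNReal.ofReal t < g a}.indicator 1 t ∂μ :=
        lintegral_lintegral_swap hmeas
    _ = ∫⁻ t in Ioi 0, μ {a | ENNReal.ofReal t < g a} := by
        refine lintegral_congr fun t => ?_
        rw [← lintegral_indicator_one (measurableSet_lt measurable_const hg)]
        rfl

lemma measure_Iic_le_mul_ofReal_of_mem_Icc {ν : Measure ℝ} {K : ℝ≥0∞} (hK : K ≠ ∞)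
    (hν : ∀ t : ℝ, 0 < t → t < 1 → ν (Iic t) ≤ K * ENNReal.ofReal t) (hmass : ν univ ≤ K)
    {s : ℝ} (hs : s ∈ Icc (0 : ℝ) 1) : ν (Iic s) ≤ K * ENNReal.ofReal s := by
  rcases hs.2.lt_or_eq with hs1 | rfl
  · have hlim : Filter.Tendsto (fun u => K * ENNReal.ofReal u) (nhdsWithin s (Ioi s))
        (nhds (K * ENNReal.ofReal s)) :=
      ENNReal.Tendsto.const_mul (ENNReal.continuous_ofReal.continuousWithinAt) (Or.inr hK)
    refine ge_of_tendsto hlim ?_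
    filter_upwards [Ioo_mem_nhdsGT hs1] with u hu
    exact (measure_mono (Iic_subset_Iic.2 hu.1.le)).trans
      (hν u (hs.1.trans_lt hu.1) hu.2)
  · simpa using (measure_mono (subset_univ _)).trans hmass

lemma Antitone.setOf_lt_subset_Iic {h : ℝ → ℝ≥0∞} (hanti : Antitone h)
    (hzero : ∀ x : ℝ, 1 < x → h x = 0) (c : ℝ≥0∞) :
    {x | c < h x} ⊆ Iic (volume ({x | c < h x} ∩ Ioo 0 1)).toReal := by
  intro x hx
  rcases le_or_gt x 0 with hx0 | hx0
  · exact hx0.trans ENNReal.toReal_nonneg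
  have hx1 : x ≤ 1 := by
    by_contra! h1
    simp [hzero x h1] at hx
  have hIoo : Ioo 0 x ⊆ {x | c < h x} ∩ Ioo 0 1 := fun y hy =>
    ⟨lt_of_lt_of_le hx (hanti hy.2.le), hy.1, hy.2.trans_le hx1⟩
  have hfin : volume ({x | c < h x} ∩ Ioo (0 : ℝ) 1) ≠ ∞ :=
    ne_top_of_le_ne_top (by simp [Real.volume_Ioo])
      (measure_mono (μ := volume) inter_subset_right)
  rw [mem_Iic, ← ENNReal.ofReal_le_iff_le_toReal hfin]
  simpa [Real.volume_Ioo] using measure_mono (μ := volume) hIoo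

theorem Antitone.lintegral_le_mul_lintegral_Ioo {ν : Measure ℝ} [SFinite ν] {K : ℝ≥0∞}
    (hK : K ≠ ∞) (hν : ∀ t : ℝ, 0 < t → t < 1 → ν (Iic t) ≤ K * ENNReal.ofReal t)
    (hmass : ν univ ≤ K) {h : ℝ → ℝ≥0∞} (hanti : Antitone h)
    (hzero : ∀ x : ℝ, 1 < x → h x = 0) :
    ∫⁻ x, h x ∂ν ≤ K * ∫⁻ x in Ioo 0 1, h x := by
  have hlevel : ∀ c : ℝ≥0∞,
      ν {x | c < h x} ≤ K * volume.restrict (Ioo 0 1) {x | c < h x} := by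
    intro c
    set A := {x | c < h x} ∩ Ioo (0 : ℝ) 1
    have hA1 : volume A ≤ 1 :=
      (measure_mono inter_subset_right).trans (by simp [Real.volume_Ioo])
    have hAfin : volume A ≠ ∞ := ne_top_of_le_ne_top ENNReal.one_ne_top hA1
    have hs : (volume A).toReal ∈ Icc (0 : ℝ) 1 :=
      ⟨ENNReal.toReal_nonneg, ENNReal.toReal_le_of_le_ofReal zero_le_one (by simpa using hA1)⟩
    calc ν {x | c < h x} ≤ ν (Iic (volume A).toReal) :=
          measure_mono (hanti.setOf_lt_subset_Iic hzero c)
      _ ≤ K * ENNReal.ofReal (volume A).toReal :=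
          measure_Iic_le_mul_ofReal_of_mem_Icc hK hν hmass hs
      _ = K * volume.restrict (Ioo 0 1) {x | c < h x} := by
          rw [ENNReal.ofReal_toReal hAfin,
            Measure.restrict_apply (measurableSet_lt measurable_const hanti.measurable)]
  calc ∫⁻ x, h x ∂ν = ∫⁻ t in Ioi 0, ν {x | ENNReal.ofReal t < h x} :=
        lintegral_eq_lintegral_meas_ofReal_lt ν hanti.measurable
    _ ≤ ∫⁻ t in Ioi 0, K * volume.restrict (Ioo 0 1) {x | ENNReal.ofReal t < h x} :=
        lintegral_mono fun t => hlevel _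
    _ = K * ∫⁻ x in Ioo 0 1, h x := by
        rw [lintegral_const_mul' K _ hK,
          ← lintegral_eq_lintegral_meas_ofReal_lt _ hanti.measurable]

theorem compound_p_to_compound_e_general {Ω : Type*} [MeasurableSpace Ω] {K : ℕ}
    (H : Fin K → Set (Measure Ω)) (Unv : Set (Measure Ω))
    (hprob : ∀ P ∈ Unv, IsProbabilityMeasure P)
    (h : ℝ → ℝ≥0∞) (hanti : Antitone h)
    (hint : ∫⁻ x in Set.Ioo (0:ℝ) 1, h x ≤ 1)
    (hzero : ∀ x : ℝ, 1 < x → h x = 0)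
    (X : Fin K → Ω → ℝ) (hX : ∀ k, Measurable (X k))
    (hp : ∀ P ∈ Unv, ∀ t : ℝ, 0 < t → t < 1 →
      ∑ k ∈ Finset.univ.filter (fun k => P ∈ H k),
        P {ω | X k ω ≤ t} ≤ (K : ℝ≥0∞) * ENNReal.ofReal t) :
    ∀ P ∈ Unv,
      ∑ k ∈ Finset.univ.filter (fun k => P ∈ H k), ∫⁻ ω, h (X k ω) ∂P ≤ K := by
  intro P hP
  have := hprob P hP
  set S := Finset.univ.filter (fun k => P ∈ H k)
  set ν := ∑ k ∈ S, P.map (X k)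
  have hν_Iic : ∀ s : ℝ, ν (Iic s) = ∑ k ∈ S, P {ω | X k ω ≤ s} := fun s => by
    simp only [ν, Measure.coe_finsetSum, Finset.sum_apply,
      Measure.map_apply (hX _) measurableSet_Iic]
    rfl
  have hmass : ν univ ≤ K := by
    simp only [ν, Measure.coe_finsetSum, Finset.sum_apply,
      Measure.map_apply (hX _) MeasurableSet.univ, preimage_univ, measure_univ,
      Finset.sum_const, nsmul_eq_mul, mul_one]
    exact_mod_cast (Finset.card_filter_le _ _).trans (Finset.card_fin K).le
  calc ∑ k ∈ S, ∫⁻ ω, h (X k ω) ∂P = ∫⁻ x, h x ∂ν := by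
        rw [lintegral_finsetSum_measure]
        exact Finset.sum_congr rfl fun k _ => (lintegral_map hanti.measurable (hX k)).symm
    _ ≤ K * ∫⁻ x in Ioo 0 1, h x :=
        hanti.lintegral_le_mul_lintegral_Ioo (ENNReal.natCast_ne_top K)
          (fun t ht0 ht1 => (hν_Iic t).trans_le (hp P hP t ht0 ht1)) hmass hzero
    _ ≤ K := by simpa using mul_le_mul_right hint (K : ℝ≥0∞)

/-- Calibrating compound p-variables with a p-to-e calibrator yields compound e-variables,
under an atomless universe (each `P ∈ Unv` admits a uniform random variable). -/
theorem compound_p_to_compound_e {Ω : Type*} [MeasurableSpace Ω] {K : ℕ}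
    (H : Fin K → Set (Measure Ω)) (Unv : Set (Measure Ω))
    (hprob : ∀ P ∈ Unv, IsProbabilityMeasure P)
    (hatomless : ∀ P ∈ Unv, ∃ U : Ω → ℝ, Measurable U ∧
      Measure.map U P = volume.restrict (Set.Icc (0:ℝ) 1))
    (h : ℝ → ℝ≥0∞) (hanti : Antitone h)
    (hint : ∫⁻ x in Set.Ioo (0:ℝ) 1, h x ≤ 1)
    (hzero : ∀ x : ℝ, 1 < x → h x = 0)
    (X : Fin K → Ω → ℝ) (hX : ∀ k, Measurable (X k)) (hXnn : ∀ k ω, 0 ≤ X k ω)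
    (hp : ∀ P ∈ Unv, ∀ t : ℝ, 0 < t → t < 1 →
      ∑ k ∈ Finset.univ.filter (fun k => P ∈ H k),
        P {ω | X k ω ≤ t} ≤ (K : ℝ≥0∞) * ENNReal.ofReal t) :
    ∀ P ∈ Unv,
      ∑ k ∈ Finset.univ.filter (fun k => P ∈ H k), ∫⁻ ω, h (X k ω) ∂P ≤ K :=
  compound_p_to_compound_e_general H Unv hprob h hanti hint hzero X hX hp
end

section
/- Suppose for each P ∈ P there exists an event A with P(A) ≥ 1 − δ_P and E^P[E·1_A] ≤ 1 + ε_P. Then E is an (ε,δ)-approximate e-variable: E^P[min(E, t)] ≤ 1 + ε_P + δ_P·t for all t ≥ 0 and all P ∈ P. -/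
open MeasureTheory
open scoped ENNReal

namespace MeasureTheory

variable {α : Type*} [MeasurableSpace α]

theorem lintegral_min_le_setLIntegral_add_mul_measure_compl (μ : Measure α) (f : α → ℝ≥0∞)
    (c : ℝ≥0∞) (A : Set α) :
    ∫⁻ x, min (f x) c ∂μ ≤ ∫⁻ x in A, f x ∂μ + c * μ Aᶜ :=
  calc ∫⁻ x, min (f x) c ∂μ
      = ∫⁻ x in A ∪ Aᶜ, min (f x) c ∂μ := by rw [Set.union_compl_self, Measure.restrict_univ]
    _ ≤ ∫⁻ x in A, min (f x) c ∂μ + ∫⁻ x in Aᶜ, min (f x) c ∂μ := lintegral_union_le _ _ _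
    _ ≤ ∫⁻ x in A, f x ∂μ + ∫⁻ _ in Aᶜ, c ∂μ :=
        add_le_add (lintegral_mono fun _ => min_le_left _ _)
          (lintegral_mono fun _ => min_le_right _ _)
    _ = ∫⁻ x in A, f x ∂μ + c * μ Aᶜ := by rw [setLIntegral_const]

theorem prob_compl_le_of_one_sub_le {μ : Measure α} [IsProbabilityMeasure μ] {A : Set α}
    (hA : MeasurableSet A) {δ : ℝ≥0∞} (h : 1 - δ ≤ μ A) : μ Aᶜ ≤ δ := by
  rw [tsub_le_iff_right] at h
  rwa [prob_compl_eq_one_sub hA, tsub_le_iff_right, add_comm]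

end MeasureTheory

theorem approx_e_of_event_general {Ω : Type*} [MeasurableSpace Ω] (Unv : Set (Measure Ω))
    (hprob : ∀ P ∈ Unv, IsProbabilityMeasure P)
    (ε δ : Measure Ω → ℝ)
    (E : Ω → ℝ≥0∞)
    (hyp : ∀ P ∈ Unv, ∃ A : Set Ω, MeasurableSet A ∧
      1 - ENNReal.ofReal (δ P) ≤ P A ∧
      ∫⁻ ω in A, E ω ∂P ≤ 1 + ENNReal.ofReal (ε P)) :
    ∀ P ∈ Unv, ∀ t : ℝ, 0 ≤ t →
      ∫⁻ ω, min (E ω) (ENNReal.ofReal t) ∂P ≤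
        1 + ENNReal.ofReal (ε P) + ENNReal.ofReal (δ P) * ENNReal.ofReal t := by
  intro P hP t _
  have := hprob P hP
  obtain ⟨A, hA, hPA, hEA⟩ := hyp P hP
  calc ∫⁻ ω, min (E ω) (ENNReal.ofReal t) ∂P
      ≤ ∫⁻ ω in A, E ω ∂P + ENNReal.ofReal t * P Aᶜ :=
        lintegral_min_le_setLIntegral_add_mul_measure_compl P E _ A
    _ ≤ 1 + ENNReal.ofReal (ε P) + ENNReal.ofReal t * ENNReal.ofReal (δ P) := by
        gcongr
        exact prob_compl_le_of_one_sub_le hA hPA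
    _ = 1 + ENNReal.ofReal (ε P) + ENNReal.ofReal (δ P) * ENNReal.ofReal t := by rw [mul_comm]

/-- Direction (E2) ⇒ (E1): if for each `P ∈ Unv` there is an event `A` with `P(A) ≥ 1 − δ_P` and
`E^P[E·1_A] ≤ 1 + ε_P`, then `E` is an `(ε,δ)`-approximate e-variable:
`E^P[min(E, t)] ≤ 1 + ε_P + δ_P·t` for all `t ≥ 0` and `P ∈ Unv`. -/
theorem approx_e_of_event {Ω : Type*} [MeasurableSpace Ω] (Unv : Set (Measure Ω))
    (hprob : ∀ P ∈ Unv, IsProbabilityMeasure P)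
    (ε δ : Measure Ω → ℝ)
    (hε : ∀ P ∈ Unv, 0 ≤ ε P) (hδ : ∀ P ∈ Unv, 0 ≤ δ P ∧ δ P ≤ 1)
    (E : Ω → ℝ≥0∞)
    (hyp : ∀ P ∈ Unv, ∃ A : Set Ω, MeasurableSet A ∧
      1 - ENNReal.ofReal (δ P) ≤ P A ∧
      ∫⁻ ω in A, E ω ∂P ≤ 1 + ENNReal.ofReal (ε P)) :
    ∀ P ∈ Unv, ∀ t : ℝ, 0 ≤ t →
      ∫⁻ ω, min (E ω) (ENNReal.ofReal t) ∂P ≤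
        1 + ENNReal.ofReal (ε P) + ENNReal.ofReal (δ P) * ENNReal.ofReal t :=
  approx_e_of_event_general Unv hprob ε δ E hyp
end

section
/- If each P ∈ P is atomless and E is an (ε,δ)-approximate e-variable (E^P[min(E,t)] ≤ 1+ε_P+δ_P t for all t ≥ 0), then for each P ∈ P there exists an event A with P(A) = 1−δ_P and E^P[E·1_A] ≤ 1+ε_P. -/
/-!
A uniform variable `U` makes `c ↦ P (B ∩ {U ≤ c})` continuous, increasing from `0` to `P B` on
`[0, 1]`, so `P` takes every value between `P {E < t}` and `P {E ≤ t}`; taking for `t` the lower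
`(1 - δ)`-quantile of `E` gives an event `A` with `{E < t} ⊆ A ⊆ {E ≤ t}` and `P A = 1 - δ`.
For finite `s ≤ t` we have `min E s = s` on `Aᶜ`, whose mass is `δ`, so the term `δ s` of the
approximate e-variable bound is exactly `∫_{Aᶜ} min E s`, leaving `∫_A min E s ≤ 1 + ε`. Since
`E ≤ t` on `A`, letting `s` increase to `t` gives `∫_A E ≤ 1 + ε`, also when `t = ∞`.
-/

open MeasureTheory Set Filter Topology
open scoped ENNReal

section Quantile

variable {α : Type*} [MeasurableSpace α] {μ : Measure α} {X : α → ℝ≥0∞} {r : ℝ≥0∞}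

noncomputable def quantile (μ : Measure α) (X : α → ℝ≥0∞) (r : ℝ≥0∞) : ℝ≥0∞ :=
  sInf {s | r ≤ μ {a | X a ≤ s}}

lemma measure_lt_quantile_le : μ {a | X a < quantile μ X r} ≤ r := by
  rcases eq_zero_or_pos (quantile μ X r) with hq | hq
  · simp [hq]
  obtain ⟨u, hu_mono, hu_mem, hu_lim⟩ := exists_seq_strictMono_tendsto' hq
  have hset : {a | X a < quantile μ X r} = ⋃ n, {a | X a ≤ u n} := by
    ext a
    simp only [mem_ofPred_eq, mem_iUnion]
    refine ⟨fun h ↦ ?_, fun ⟨n, hn⟩ ↦ hn.trans_lt (hu_mem n).2⟩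
    obtain ⟨n, hn⟩ := (hu_lim.eventually (lt_mem_nhds h)).exists
    exact ⟨n, hn.le⟩
  rw [hset, Monotone.measure_iUnion fun m n hmn a ha ↦ ha.trans (hu_mono.monotone hmn)]
  exact iSup_le fun n ↦ (not_le.1 fun hn ↦ (hu_mem n).2.not_ge (sInf_le hn)).le

lemma le_measure_le_quantile [IsFiniteMeasure μ] (hX : Measurable X) (hr : r ≤ μ univ) :
    r ≤ μ {a | X a ≤ quantile μ X r} := by
  obtain ⟨u, hu_anti, hu_lim, hu_mem⟩ :=
    exists_seq_tendsto_sInf (S := {s | r ≤ μ {a | X a ≤ s}}) ⟨⊤, by simpa using hr⟩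
      (OrderBot.bddBelow _)
  have hset : {a | X a ≤ quantile μ X r} = ⋂ n, {a | X a ≤ u n} := by
    ext a
    simp only [mem_ofPred_eq, mem_iInter]
    exact ⟨fun h n ↦ h.trans (sInf_le (hu_mem n)), fun h ↦ ge_of_tendsto' hu_lim h⟩
  rw [hset, Antitone.measure_iInter (fun m n hmn a ha ↦ ha.trans (hu_anti hmn))
    (fun n ↦ (measurableSet_le hX measurable_const).nullMeasurableSet) ⟨0, measure_ne_top _ _⟩]
  exact le_iInf hu_mem

end Quantile

section Uniform

lemma measure_Iic_eq_add_measure_Ioc {ν : Measure ℝ} {a b : ℝ} (hab : a ≤ b) :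
    ν (Iic b) = ν (Iic a) + ν (Ioc a b) := by
  rw [← Iic_union_Ioc_eq_Iic hab, measure_union (Iic_disjoint_Ioc le_rfl) measurableSet_Ioc]

variable {ν : Measure ℝ} [IsFiniteMeasure ν]

lemma lipschitzWith_one_measure_Iic_toReal (hν : ν ≤ volume) :
    LipschitzWith 1 fun c ↦ (ν (Iic c)).toReal := by
  refine LipschitzWith.of_le_add fun b a ↦ ?_
  rcases le_total b a with hba | hab
  · exact (ENNReal.toReal_mono (measure_ne_top _ _) (measure_mono (Iic_subset_Iic.2 hba))).trans
      (le_add_of_nonneg_right dist_nonneg)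
  have hIoc : (ν (Ioc a b)).toReal ≤ b - a := by
    simpa [hab] using ENNReal.toReal_mono ENNReal.ofReal_ne_top
      ((hν _).trans_eq (Real.volume_Ioc (a := a) (b := b)))
  rw [measure_Iic_eq_add_measure_Ioc hab, ENNReal.toReal_add (measure_ne_top _ _)
    (measure_ne_top _ _), Real.dist_eq, abs_of_nonneg (sub_nonneg.2 hab)]
  linarith

lemma exists_measure_Iic_eq_of_le_volume_Icc (hν : ν ≤ volume.restrict (Icc 0 1)) {r : ℝ≥0∞}
    (hr : r ≤ ν univ) : ∃ c, ν (Iic c) = r := by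
  have hν_Icc : ∀ᵐ x ∂ν, x ∈ Icc (0 : ℝ) 1 :=
    Measure.absolutelyContinuous_of_le hν (ae_restrict_mem measurableSet_Icc)
  have h0 : ν (Iic 0) = 0 := by
    refine measure_mono_null_ae ?_ (nonpos_iff_eq_zero.1 <|
      (hν.trans Measure.restrict_le_self) {0} |>.trans_eq Real.volume_singleton)
    filter_upwards [hν_Icc] with x hx hx0 using le_antisymm hx0 hx.1
  have h1 : ν (Iic 1) = ν univ := by
    refine le_antisymm (measure_mono (subset_univ _)) (measure_mono_ae ?_)
    filter_upwards [hν_Icc] with x hx _ using hx.2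
  have hr_fin : r ≠ ∞ := ne_top_of_le_ne_top (measure_ne_top _ _) hr
  have hcont :=
    (lipschitzWith_one_measure_Iic_toReal (hν.trans Measure.restrict_le_self)).continuous
  have hr_mem : r.toReal ∈ Icc (ν (Iic 0)).toReal (ν (Iic 1)).toReal := by
    rw [h0, h1]
    exact ⟨ENNReal.toReal_nonneg, ENNReal.toReal_mono (measure_ne_top _ _) hr⟩
  obtain ⟨c, -, hc⟩ := intermediate_value_Icc zero_le_one hcont.continuousOn hr_mem
  exact ⟨c, (ENNReal.toReal_eq_toReal_iff' (measure_ne_top _ _) hr_fin).1 hc⟩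

variable {Ω : Type*} [MeasurableSpace Ω] {P : Measure Ω} [IsFiniteMeasure P]

lemma exists_subset_measure_eq_of_map_eq_uniform {U : Ω → ℝ} (hU : Measurable U)
    (hmap : P.map U = volume.restrict (Icc 0 1)) {S : Set Ω} (hS : MeasurableSet S)
    {r : ℝ≥0∞} (hr : r ≤ P S) : ∃ C ⊆ S, MeasurableSet C ∧ P C = r := by
  have hν : (P.restrict S).map U ≤ volume.restrict (Icc 0 1) :=
    hmap ▸ Measure.map_mono Measure.restrict_le_self hU
  obtain ⟨c, hc⟩ := exists_measure_Iic_eq_of_le_volume_Icc hν <| hr.trans_eq <| by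
    rw [Measure.map_apply hU MeasurableSet.univ, preimage_univ, Measure.restrict_apply_univ]
  refine ⟨S ∩ U ⁻¹' Iic c, inter_subset_left, hS.inter (hU measurableSet_Iic), ?_⟩
  rwa [Measure.map_apply hU measurableSet_Iic, Measure.restrict_apply (hU measurableSet_Iic),
    inter_comm] at hc

lemma exists_between_measure_eq_of_map_eq_uniform {U : Ω → ℝ} (hU : Measurable U)
    (hmap : P.map U = volume.restrict (Icc 0 1)) {B B' : Set Ω} (hB : MeasurableSet B)
    (hB' : MeasurableSet B') (hBB' : B ⊆ B') {r : ℝ≥0∞} (hBr : P B ≤ r) (hrB' : r ≤ P B') :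
    ∃ A, MeasurableSet A ∧ B ⊆ A ∧ A ⊆ B' ∧ P A = r := by
  obtain ⟨C, hCsub, hC, hPC⟩ := exists_subset_measure_eq_of_map_eq_uniform hU hmap (hB'.diff hB)
    (r := r - P B) (by
      rw [measure_sdiff hBB' hB.nullMeasurableSet (measure_ne_top _ _)]
      exact tsub_le_tsub_right hrB' _)
  refine ⟨B ∪ C, hB.union hC, subset_union_left, union_subset hBB' (hCsub.trans sdiff_subset), ?_⟩
  rw [measure_union (disjoint_sdiff_right.mono_right hCsub) hC, hPC,
    add_tsub_cancel_of_le hBr]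

lemma exists_measurableSet_measure_eq_of_map_eq_uniform {U : Ω → ℝ} (hU : Measurable U)
    (hmap : P.map U = volume.restrict (Icc 0 1)) {X : Ω → ℝ≥0∞} (hX : Measurable X)
    {r : ℝ≥0∞} (hr : r ≤ P univ) :
    ∃ t A, MeasurableSet A ∧ {ω | X ω < t} ⊆ A ∧ A ⊆ {ω | X ω ≤ t} ∧ P A = r :=
  ⟨quantile P X r, exists_between_measure_eq_of_map_eq_uniform hU hmap
    (measurableSet_lt hX measurable_const) (measurableSet_le hX measurable_const)
    (fun ω (h : X ω < _) ↦ h.le) measure_lt_quantile_le (le_measure_le_quantile hX hr)⟩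

end Uniform

section Truncation

variable {α : Type*} [MeasurableSpace α] {μ : Measure α} {f : α → ℝ≥0∞} {A : Set α}

lemma setLIntegral_min_le_of_le_compl (hA : MeasurableSet A) {s c d : ℝ≥0∞} (hs : s ≠ ∞)
    (hd : d ≠ ∞) (hfA : ∀ a ∉ A, s ≤ f a) (hdA : d ≤ μ Aᶜ)
    (hint : ∫⁻ a, min (f a) s ∂μ ≤ c + d * s) :
    ∫⁻ a in A, min (f a) s ∂μ ≤ c := by
  have hcompl : ∫⁻ a in Aᶜ, min (f a) s ∂μ = s * μ Aᶜ := by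
    rw [setLIntegral_congr_fun hA.compl fun a ha ↦ min_eq_right (hfA a ha), setLIntegral_const]
  refine (ENNReal.add_le_add_iff_right (ENNReal.mul_ne_top hd hs)).1 ?_
  calc ∫⁻ a in A, min (f a) s ∂μ + d * s
      ≤ ∫⁻ a in A, min (f a) s ∂μ + ∫⁻ a in Aᶜ, min (f a) s ∂μ := by
        rw [hcompl, mul_comm]; gcongr
    _ = ∫⁻ a, min (f a) s ∂μ := lintegral_add_compl _ hA
    _ ≤ c + d * s := hint

lemma setLIntegral_le_of_forall_min_le (hf : Measurable f) (hA : MeasurableSet A) {t c : ℝ≥0∞}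
    (hfA : ∀ a ∈ A, f a ≤ t) (h : ∀ s ≠ ∞, s ≤ t → ∫⁻ a in A, min (f a) s ∂μ ≤ c) :
    ∫⁻ a in A, f a ∂μ ≤ c := by
  have hsup : ∫⁻ a in A, f a ∂μ = ⨆ n : ℕ, ∫⁻ a in A, min (f a) n ∂μ := by
    rw [← lintegral_iSup (fun n ↦ hf.min measurable_const)
      fun m n hmn a ↦ min_le_min_left _ (Nat.mono_cast hmn)]
    congr with a
    rw [← inf_iSup_eq, ENNReal.iSup_natCast, inf_top_eq]
  rw [hsup]
  refine iSup_le fun n ↦ ?_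
  calc ∫⁻ a in A, min (f a) n ∂μ = ∫⁻ a in A, min (f a) (min n t) ∂μ :=
        setLIntegral_congr_fun hA fun a ha ↦ by
          rw [min_comm (n : ℝ≥0∞) t, ← min_assoc, min_eq_left (hfA a ha)]
    _ ≤ c := h _ (ne_top_of_le_ne_top (ENNReal.natCast_ne_top n) (min_le_left _ _))
        (min_le_right _ _)

end Truncation

theorem approx_e_to_event_general {Ω : Type*} [MeasurableSpace Ω] (Unv : Set (Measure Ω))
    (hprob : ∀ P ∈ Unv, IsProbabilityMeasure P)
    (hatomless : ∀ P ∈ Unv, ∃ U : Ω → ℝ, Measurable U ∧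
      Measure.map U P = volume.restrict (Set.Icc (0:ℝ) 1))
    (ε δ : Measure Ω → ℝ)
    (hδ : ∀ P ∈ Unv, 0 ≤ δ P ∧ δ P ≤ 1)
    (E : Ω → ℝ≥0∞) (hEmeas : Measurable E)
    (happrox : ∀ P ∈ Unv, ∀ t : ℝ, 0 ≤ t →
      ∫⁻ ω, min (E ω) (ENNReal.ofReal t) ∂P ≤
        1 + ENNReal.ofReal (ε P) + ENNReal.ofReal (δ P) * ENNReal.ofReal t) :
    ∀ P ∈ Unv, ∃ A : Set Ω, MeasurableSet A ∧
      P A = 1 - ENNReal.ofReal (δ P) ∧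
      ∫⁻ ω in A, E ω ∂P ≤ 1 + ENNReal.ofReal (ε P) := by
  intro P hP
  have := hprob P hP
  obtain ⟨U, hU, hmap⟩ := hatomless P hP
  obtain ⟨t, A, hA, hltA, hAle, hPA⟩ := exists_measurableSet_measure_eq_of_map_eq_uniform hU hmap
    hEmeas (r := 1 - ENNReal.ofReal (δ P)) (measure_univ (μ := P) ▸ tsub_le_self)
  have hPAc : P Aᶜ = ENNReal.ofReal (δ P) := by
    rw [prob_compl_eq_one_sub hA, hPA,
      ENNReal.sub_sub_cancel ENNReal.one_ne_top (ENNReal.ofReal_le_one.2 (hδ P hP).2)]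
  refine ⟨A, hA, hPA, setLIntegral_le_of_forall_min_le hEmeas hA (fun ω hω ↦ hAle hω)
    fun s hs hst ↦ setLIntegral_min_le_of_le_compl hA hs ENNReal.ofReal_ne_top
      (fun ω hω ↦ hst.trans (not_lt.1 fun h ↦ hω (hltA h))) hPAc.ge ?_⟩
  simpa [ENNReal.ofReal_toReal hs] using happrox P hP s.toReal ENNReal.toReal_nonneg

/-- Direction (E1) ⇒ (E2) under atomlessness: if each `P ∈ Unv` admits a uniform random variable
and `E` is an `(ε,δ)`-approximate e-variable, then for each `P ∈ Unv` there exists an event `A`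
with `P(A) = 1 − δ_P` and `E^P[E·1_A] ≤ 1 + ε_P`. -/
theorem approx_e_to_event {Ω : Type*} [MeasurableSpace Ω] (Unv : Set (Measure Ω))
    (hprob : ∀ P ∈ Unv, IsProbabilityMeasure P)
    (hatomless : ∀ P ∈ Unv, ∃ U : Ω → ℝ, Measurable U ∧
      Measure.map U P = volume.restrict (Set.Icc (0:ℝ) 1))
    (ε δ : Measure Ω → ℝ)
    (hε : ∀ P ∈ Unv, 0 ≤ ε P) (hδ : ∀ P ∈ Unv, 0 ≤ δ P ∧ δ P ≤ 1)
    (E : Ω → ℝ≥0∞) (hEmeas : Measurable E)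
    (happrox : ∀ P ∈ Unv, ∀ t : ℝ, 0 ≤ t →
      ∫⁻ ω, min (E ω) (ENNReal.ofReal t) ∂P ≤
        1 + ENNReal.ofReal (ε P) + ENNReal.ofReal (δ P) * ENNReal.ofReal t) :
    ∀ P ∈ Unv, ∃ A : Set Ω, MeasurableSet A ∧
      P A = 1 - ENNReal.ofReal (δ P) ∧
      ∫⁻ ω in A, E ω ∂P ≤ 1 + ENNReal.ofReal (ε P) :=
  approx_e_to_event_general Unv hprob hatomless ε δ hδ E hEmeas happrox
end

section
/- If E is an (ε,δ)-approximate e-variable for P, then P := min(1/E, 1) is an (ε,δ)-approximate p-variable: P(P ≤ t) ≤ (1+ε_P)t + δ_P for all t ∈ (0,1), P ∈ P. -/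
open MeasureTheory
open scoped ENNReal

/-- If `E` is an `(ε,δ)`-approximate e-variable for `Unv`, then `min (1/E) 1` is an
`(ε,δ)`-approximate p-variable: `P(min(1/E,1) ≤ t) ≤ (1+ε_P)·t + δ_P` for `t ∈ (0,1)`. -/
theorem calibrate_approx_e_to_approx_p {Ω : Type*} [MeasurableSpace Ω]
    (Unv : Set (Measure Ω)) (hprob : ∀ P ∈ Unv, IsProbabilityMeasure P)
    (ε δ : Measure Ω → ℝ)
    (hε : ∀ P ∈ Unv, 0 ≤ ε P) (hδ : ∀ P ∈ Unv, 0 ≤ δ P ∧ δ P ≤ 1)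
    (E : Ω → ℝ≥0∞) (hEmeas : Measurable E)
    (happrox : ∀ P ∈ Unv, ∀ t : ℝ, 0 ≤ t →
      ∫⁻ ω, min (E ω) (ENNReal.ofReal t) ∂P ≤
        1 + ENNReal.ofReal (ε P) + ENNReal.ofReal (δ P) * ENNReal.ofReal t) :
    ∀ P ∈ Unv, ∀ t : ℝ≥0∞, 0 < t → t < 1 →
      P {ω | min (E ω)⁻¹ 1 ≤ t} ≤ (1 + ENNReal.ofReal (ε P)) * t + ENNReal.ofReal (δ P) := by
  intro P hP t ht0 ht1
  have ht_ne : t ≠ 0 := ht0.ne'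
  have ht_top : t ≠ ∞ := (ht1.trans ENNReal.one_lt_top).ne
  have hinv_ne : t⁻¹ ≠ 0 := ENNReal.inv_ne_zero.mpr ht_top
  have hinv_top : t⁻¹ ≠ ∞ := ENNReal.inv_ne_top.mpr ht_ne
  -- t⁻¹ as ofReal
  have hofReal : ENNReal.ofReal t⁻¹.toReal = t⁻¹ := ENNReal.ofReal_toReal hinv_top
  -- set equality
  have hset : {ω | min (E ω)⁻¹ 1 ≤ t} = {ω | t⁻¹ ≤ min (E ω) t⁻¹} := by
    ext ω
    simp only [Set.mem_setOf_eq, le_min_iff, le_refl, and_true, min_le_iff]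
    constructor
    · rintro (h | h)
      · exact ENNReal.inv_le_iff_inv_le.mp h
      · exact absurd (h.trans_lt ht1) (lt_irrefl _)
    · intro h
      exact Or.inl (ENNReal.inv_le_iff_inv_le.mpr h)
  rw [hset]
  have hmeas : Measurable fun ω => min (E ω) t⁻¹ := hEmeas.min measurable_const
  have hmarkov := meas_ge_le_lintegral_div (μ := P) hmeas.aemeasurable hinv_ne hinv_top
  calc P {ω | t⁻¹ ≤ min (E ω) t⁻¹} ≤ (∫⁻ ω, min (E ω) t⁻¹ ∂P) / t⁻¹ := hmarkov
    _ = (∫⁻ ω, min (E ω) t⁻¹ ∂P) * t := by rw [ENNReal.div_eq_inv_mul, inv_inv, mul_comm]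
    _ ≤ (1 + ENNReal.ofReal (ε P) + ENNReal.ofReal (δ P) * t⁻¹) * t := by
        gcongr
        have := happrox P hP t⁻¹.toReal ENNReal.toReal_nonneg
        rwa [hofReal] at this
    _ = (1 + ENNReal.ofReal (ε P)) * t + ENNReal.ofReal (δ P) * (t⁻¹ * t) := by ring
    _ = (1 + ENNReal.ofReal (ε P)) * t + ENNReal.ofReal (δ P) := by
        rw [ENNReal.inv_mul_cancel ht_ne ht_top, mul_one]
end

section
/- An (ε,δ)-approximate p-variable for P is also a (0, δ')-approximate p-variable for P, where δ'_P = (ε_P + δ_P)/(1 + ε_P). That is, if P(P ≤ t) ≤ (1+ε_P)t + δ_P for all t ∈ (0,1), then P(P ≤ t) ≤ t + δ'_P for all t ∈ (0,1). -/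
/-!
Put `t₀ = (1 - δ)/(1 + ε)` and `s = t - t₀`. Then `(1 + ε) t + δ = (1 + ε) s + 1` and
`t + (ε + δ)/(1 + ε) = s + 1`. For `s ≤ 0` the factor `1 + ε ≥ 1` only makes `(1 + ε) s` smaller,
and for `s ≥ 0` the right-hand side is at least `1`, which bounds every probability.
-/

open MeasureTheory
open scoped ENNReal

lemma min_one_add_mul_add_one_le {ε : ℝ} (hε : 0 ≤ ε) (s : ℝ) :
    min ((1 + ε) * s + 1) 1 ≤ s + 1 := by
  rcases le_total s 0 with hs | hs
  · exact min_le_of_left_le (by nlinarith)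
  · exact min_le_of_right_le (by linarith)

lemma min_one_add_mul_add_le {ε : ℝ} (hε : 0 ≤ ε) (δ t : ℝ) :
    min ((1 + ε) * t + δ) 1 ≤ t + (ε + δ) / (1 + ε) := by
  have hpos : (1 + ε) ≠ 0 := by positivity
  set s := t - (1 - δ) / (1 + ε)
  have hlhs : (1 + ε) * t + δ = (1 + ε) * s + 1 := by
    simp only [s]; field_simp; ring
  have hrhs : t + (ε + δ) / (1 + ε) = s + 1 := by
    simp only [s]; field_simp; ring
  rw [hlhs, hrhs]
  exact min_one_add_mul_add_one_le hε s

theorem approx_p_eps_to_delta_general {Ω : Type*} [MeasurableSpace Ω]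
    (Unv : Set (Measure Ω)) (hprob : ∀ P ∈ Unv, IsProbabilityMeasure P)
    (ε δ : Measure Ω → ℝ)
    (hε : ∀ P ∈ Unv, 0 ≤ ε P)
    (X : Ω → ℝ)
    (happrox : ∀ P ∈ Unv, ∀ t : ℝ, 0 < t → t < 1 →
      P {ω | X ω ≤ t} ≤ ENNReal.ofReal ((1 + ε P) * t + δ P)) :
    ∀ P ∈ Unv, ∀ t : ℝ, 0 < t → t < 1 →
      P {ω | X ω ≤ t} ≤ ENNReal.ofReal (t + (ε P + δ P) / (1 + ε P)) := by
  intro P hP t ht0 ht1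
  have := hprob P hP
  calc P {ω | X ω ≤ t}
      ≤ min (ENNReal.ofReal ((1 + ε P) * t + δ P)) (ENNReal.ofReal 1) := by
        rw [ENNReal.ofReal_one]
        exact le_min (happrox P hP t ht0 ht1) prob_le_one
    _ = ENNReal.ofReal (min ((1 + ε P) * t + δ P) 1) := (ENNReal.ofReal_min _ _).symm
    _ ≤ ENNReal.ofReal (t + (ε P + δ P) / (1 + ε P)) :=
        ENNReal.ofReal_le_ofReal (min_one_add_mul_add_le (hε P hP) (δ P) t)

/-- An `(ε,δ)`-approximate p-variable is also a `(0, δ')`-approximate p-variable with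
`δ' = (ε + δ)/(1 + ε)`. -/
theorem approx_p_eps_to_delta {Ω : Type*} [MeasurableSpace Ω]
    (Unv : Set (Measure Ω)) (hprob : ∀ P ∈ Unv, IsProbabilityMeasure P)
    (ε δ : Measure Ω → ℝ)
    (hε : ∀ P ∈ Unv, 0 ≤ ε P) (hδ : ∀ P ∈ Unv, 0 ≤ δ P ∧ δ P ≤ 1)
    (X : Ω → ℝ)
    (happrox : ∀ P ∈ Unv, ∀ t : ℝ, 0 < t → t < 1 →
      P {ω | X ω ≤ t} ≤ ENNReal.ofReal ((1 + ε P) * t + δ P)) :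
    ∀ P ∈ Unv, ∀ t : ℝ, 0 < t → t < 1 →
      P {ω | X ω ≤ t} ≤ ENNReal.ofReal (t + (ε P + δ P) / (1 + ε P)) :=
  approx_p_eps_to_delta_general Unv hprob ε δ hε X happrox
end

section
/- If a sequence of nonnegative random variables (P⁽ⁿ⁾) converges in distribution under each P ∈ P to a p-variable P (satisfying P(P ≤ t) ≤ t for all t), then limsup_{n→∞} sup_{t∈[0,1]} (P(P⁽ⁿ⁾ ≤ t) − t)₊ = 0 for each P ∈ P; i.e., (P⁽ⁿ⁾) is a sequence of asymptotic p-variables. -/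
open MeasureTheory
open scoped ENNReal
open Filter

/-- If a sequence of nonnegative random variables `Xₙ` converges in distribution (tested against
bounded continuous functions) under `P` to a p-variable `X`, then the worst-case p-value deficit
`sup_{t ∈ [0,1]} (P(Xₙ ≤ t) − t)₊` has limsup `0`: the `Xₙ` are asymptotic p-variables. -/
theorem asymptotic_p_of_convergence_in_distribution {Ω : Type*} [MeasurableSpace Ω]
    (P : Measure Ω) [IsProbabilityMeasure P]
    (Xn : ℕ → Ω → ℝ) (X : Ω → ℝ)
    (hXn : ∀ n, Measurable (Xn n)) (hX : Measurable X)
    (hnn : ∀ n ω, 0 ≤ Xn n ω)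
    (hconv : ∀ f : BoundedContinuousFunction ℝ ℝ,
      Tendsto (fun n => ∫ ω, f (Xn n ω) ∂P) atTop (nhds (∫ ω, f (X ω) ∂P)))
    (hpvar : ∀ t : ℝ, 0 ≤ t → t ≤ 1 → P {ω | X ω ≤ t} ≤ ENNReal.ofReal t) :
    Filter.limsup
      (fun n => ⨆ t ∈ Set.Icc (0:ℝ) 1, max ((P {ω | Xn n ω ≤ t}).toReal - t) 0)
      atTop = 0 := by
  have hXnae : ∀ n, AEMeasurable (Xn n) P := fun n => (hXn n).aemeasurable
  set μ : ProbabilityMeasure ℝ := ⟨P.map X, Measure.isProbabilityMeasure_map hX.aemeasurable⟩ with hμ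
  set μs : ℕ → ProbabilityMeasure ℝ :=
    fun n => ⟨P.map (Xn n), Measure.isProbabilityMeasure_map (hXnae n)⟩ with hμs
  have hμconv : Tendsto μs atTop (nhds μ) := by
    rw [ProbabilityMeasure.tendsto_iff_forall_integral_tendsto]
    intro f
    have h1 : ∀ n, ∫ x, f x ∂(μs n : Measure ℝ) = ∫ ω, f (Xn n ω) ∂P := fun n =>
      integral_map (hXnae n) f.continuous.measurable.aestronglyMeasurable
    have h2 : ∫ x, f x ∂(μ : Measure ℝ) = ∫ ω, f (X ω) ∂P :=
      integral_map hX.aemeasurable f.continuous.measurable.aestronglyMeasurable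
    simp_rw [h1, h2]
    exact hconv f
  have key : ∀ t : ℝ, 0 ≤ t → t ≤ 1 → ∀ ε > (0:ℝ), ∀ᶠ n in atTop,
      (P {ω | Xn n ω ≤ t}).toReal ≤ t + ε := by
    intro t ht0 ht1 ε hε
    have hls := ProbabilityMeasure.limsup_measure_closed_le_of_tendsto hμconv
      (isClosed_Iic (a := t))
    have hmap : (μ : Measure ℝ) (Set.Iic t) ≤ ENNReal.ofReal t := by
      have heq : (μ : Measure ℝ) (Set.Iic t) = P {ω | X ω ≤ t} := by
        have hc : (μ : Measure ℝ) = P.map X := rfl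
        rw [hc, Measure.map_apply hX measurableSet_Iic]
        rfl
      rw [heq]; exact hpvar t ht0 ht1
    have hlt : Filter.limsup (fun n => ((μs n : Measure ℝ)) (Set.Iic t)) atTop
        < ENNReal.ofReal (t + ε) := by
      refine lt_of_le_of_lt (hls.trans hmap) ?_
      rw [ENNReal.ofReal_lt_ofReal_iff (by linarith)]
      linarith
    have hev := Filter.eventually_lt_of_limsup_lt hlt
    filter_upwards [hev] with n hn
    have heq : ((μs n : Measure ℝ)) (Set.Iic t) = P {ω | Xn n ω ≤ t} := by
      have hc : ((μs n : Measure ℝ)) = P.map (Xn n) := rfl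
      rw [hc, Measure.map_apply (hXn n) measurableSet_Iic]
      rfl
    rw [heq] at hn
    calc (P {ω | Xn n ω ≤ t}).toReal ≤ (ENNReal.ofReal (t + ε)).toReal :=
          ENNReal.toReal_mono ENNReal.ofReal_ne_top hn.le
      _ = t + ε := ENNReal.toReal_ofReal (by linarith)
  have main : ∀ ε > (0:ℝ), ∀ᶠ n in atTop,
      (⨆ t ∈ Set.Icc (0:ℝ) 1, max ((P {ω | Xn n ω ≤ t}).toReal - t) 0) ≤ ε := by
    intro ε hε
    obtain ⟨k, hk⟩ := exists_nat_one_div_lt (half_pos hε)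
    set K : ℕ := k + 1 with hKdef
    have hK : (0:ℝ) < (K : ℝ) := by positivity
    have h1k : 1 / (K:ℝ) < ε / 2 := by
      rw [hKdef]; push_cast; exact hk
    have hgrid : ∀ᶠ n in atTop, ∀ i ∈ Finset.range (K + 1),
        (P {ω | Xn n ω ≤ (i:ℝ)/(K:ℝ)}).toReal ≤ (i:ℝ)/(K:ℝ) + ε/2 := by
      rw [Filter.eventually_all_finset]
      intro i hi
      refine key ((i:ℝ)/(K:ℝ)) (by positivity) ?_ (ε/2) (half_pos hε)
      rw [div_le_one hK]
      exact_mod_cast Nat.lt_succ_iff.mp (Finset.mem_range.mp hi)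
    filter_upwards [hgrid] with n hn
    refine Real.iSup_le (fun t => Real.iSup_le (fun ht => ?_) hε.le) hε.le
    obtain ⟨ht0, ht1⟩ := ht
    set i : ℕ := ⌈t * (K:ℝ)⌉₊ with hidef
    have hiK : i ≤ K := by
      rw [hidef]
      refine Nat.ceil_le.mpr ?_
      nlinarith
    have hti : t ≤ (i:ℝ)/(K:ℝ) := by
      rw [le_div_iff₀ hK]; exact Nat.le_ceil _
    have hit : (i:ℝ)/(K:ℝ) ≤ t + 1/(K:ℝ) := by
      rw [div_le_iff₀ hK]
      have hc : (i:ℝ) < t * (K:ℝ) + 1 := Nat.ceil_lt_add_one (by positivity)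
      have he : (t + 1/(K:ℝ)) * (K:ℝ) = t * (K:ℝ) + 1 := by field_simp
      linarith
    have hmono : (P {ω | Xn n ω ≤ t}).toReal ≤ (P {ω | Xn n ω ≤ (i:ℝ)/(K:ℝ)}).toReal :=
      ENNReal.toReal_mono (measure_ne_top _ _)
        (measure_mono (fun ω hx => le_trans hx hti))
    have hb := hn i (Finset.mem_range.mpr (Nat.lt_succ_of_le hiK))
    refine max_le ?_ hε.le
    linarith
  have htend : Tendsto
      (fun n => ⨆ t ∈ Set.Icc (0:ℝ) 1, max ((P {ω | Xn n ω ≤ t}).toReal - t) 0)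
      atTop (nhds 0) := by
    rw [Metric.tendsto_atTop]
    intro ε hε
    obtain ⟨N, hN⟩ := Filter.eventually_atTop.mp (main (ε/2) (half_pos hε))
    refine ⟨N, fun n hn => ?_⟩
    have h0 : 0 ≤ ⨆ t ∈ Set.Icc (0:ℝ) 1, max ((P {ω | Xn n ω ≤ t}).toReal - t) 0 :=
      Real.iSup_nonneg fun t => Real.iSup_nonneg fun _ => le_max_right _ _
    rw [Real.dist_eq, sub_zero, abs_of_nonneg h0]
    exact lt_of_le_of_lt (hN n hn) (half_lt_self hε)
  exact htend.limsup_eq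
end

section
/- If a sequence of asymptotic e-variables (E⁽ⁿ⁾) is uniformly integrable under each P ∈ P, then it is strongly asymptotic: limsup_{n→∞} E^P[E⁽ⁿ⁾] ≤ 1 for all P ∈ P. -/
open MeasureTheory
open scoped ENNReal
open Filter

/-!
Split `Eⁿ` at a level `T`: the truncation `min Eⁿ T` has expectation at most
`1 + εₙ + δₙ T`, which tends to `1` as `n → ∞`, while the part above `T` has expectation at most
the uniform tail `supₘ E[Eᵐ; Eᵐ ≥ T]`. Hence `limsup E[Eⁿ] ≤ 1 + supₘ E[Eᵐ; Eᵐ ≥ T]` for every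
`T`, and uniform integrability sends the right-hand side to `1` as `T → ∞`.
-/

section TruncationTail

variable {Ω : Type*} [MeasurableSpace Ω] {μ : Measure Ω}

theorem lintegral_le_lintegral_min_add_setLIntegral {f : Ω → ℝ≥0∞} (hf : Measurable f)
    (c : ℝ≥0∞) :
    ∫⁻ ω, f ω ∂μ ≤ ∫⁻ ω, min (f ω) c ∂μ + ∫⁻ ω in {ω | c ≤ f ω}, f ω ∂μ := by
  have hpoint : ∀ ω, f ω ≤ min (f ω) c + {ω | c ≤ f ω}.indicator f ω := by
    intro ω
    by_cases h : c ≤ f ω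
    · simp [Set.indicator_of_mem (show ω ∈ {ω | c ≤ f ω} from h)]
    · simp [Set.indicator_of_notMem (show ω ∉ {ω | c ≤ f ω} from h), (not_le.mp h).le]
  calc ∫⁻ ω, f ω ∂μ ≤ ∫⁻ ω, (min (f ω) c + {ω | c ≤ f ω}.indicator f ω) ∂μ :=
        lintegral_mono hpoint
    _ = _ := by
        rw [lintegral_add_left (hf.min measurable_const),
          lintegral_indicator (measurableSet_le measurable_const hf)]

theorem limsup_lintegral_le_one_add_iSup_setLIntegral {f : ℕ → Ω → ℝ≥0∞}
    (hf : ∀ n, Measurable (f n)) {c : ℝ≥0∞} {b : ℕ → ℝ≥0∞} (hb : Tendsto b atTop (nhds 1))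
    (hmin : ∀ n, ∫⁻ ω, min (f n ω) c ∂μ ≤ b n) :
    limsup (fun n => ∫⁻ ω, f n ω ∂μ) atTop ≤
      1 + ⨆ n, ∫⁻ ω in {ω | c ≤ f n ω}, f n ω ∂μ := by
  set tail := ⨆ n, ∫⁻ ω in {ω | c ≤ f n ω}, f n ω ∂μ
  have hbound : ∀ n, ∫⁻ ω, f n ω ∂μ ≤ b n + tail := fun n =>
    (lintegral_le_lintegral_min_add_setLIntegral (hf n) c).trans <|
      add_le_add (hmin n) (le_iSup (fun m => ∫⁻ ω in {ω | c ≤ f m ω}, f m ω ∂μ) n)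
  calc limsup (fun n => ∫⁻ ω, f n ω ∂μ) atTop ≤ limsup (fun n => b n + tail) atTop :=
        limsup_le_limsup (Eventually.of_forall hbound)
    _ = 1 + tail := (hb.add_const tail).limsup_eq

end TruncationTail

theorem ENNReal.tendsto_one_add_ofReal_add_ofReal_mul {a b : ℕ → ℝ}
    (ha : Tendsto a atTop (nhds 0)) (hb : Tendsto b atTop (nhds 0)) {t : ℝ≥0∞} (ht : t ≠ ∞) :
    Tendsto (fun n => 1 + ENNReal.ofReal (a n) + ENNReal.ofReal (b n) * t) atTop (nhds 1) := by
  have ha' : Tendsto (fun n => ENNReal.ofReal (a n)) atTop (nhds 0) := by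
    simpa using ENNReal.tendsto_ofReal ha
  have hb' : Tendsto (fun n => ENNReal.ofReal (b n) * t) atTop (nhds 0) := by
    simpa using ENNReal.Tendsto.mul_const (ENNReal.tendsto_ofReal hb) (Or.inr ht)
  simpa using (ha'.const_add 1).add hb'

theorem strongly_asymptotic_of_uniformly_integrable_general {Ω : Type*} [MeasurableSpace Ω]
    (Unv : Set (Measure Ω))
    (E : ℕ → Ω → ℝ≥0∞) (hEmeas : ∀ n, Measurable (E n))
    (ε δ : ℕ → Measure Ω → ℝ)
    (htend : ∀ P ∈ Unv, Tendsto (fun n => ε n P) atTop (nhds 0) ∧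
      Tendsto (fun n => δ n P) atTop (nhds 0))
    (happrox : ∀ P ∈ Unv, ∀ n, ∀ t : ℝ, 0 ≤ t →
      ∫⁻ ω, min (E n ω) (ENNReal.ofReal t) ∂P ≤
        1 + ENNReal.ofReal (ε n P) + ENNReal.ofReal (δ n P) * ENNReal.ofReal t)
    (hui : ∀ P ∈ Unv, Tendsto
      (fun T : ℝ => ⨆ n, ∫⁻ ω in {ω | ENNReal.ofReal T ≤ E n ω}, E n ω ∂P)
      atTop (nhds 0)) :
    ∀ P ∈ Unv, Filter.limsup (fun n => ∫⁻ ω, E n ω ∂P) atTop ≤ 1 := by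
  intro P hP
  have hlimit : Tendsto (fun T : ℝ => 1 + ⨆ n, ∫⁻ ω in {ω | ENNReal.ofReal T ≤ E n ω}, E n ω ∂P)
      atTop (nhds 1) := by
    simpa using (hui P hP).const_add 1
  refine ge_of_tendsto hlimit ?_
  filter_upwards [eventually_ge_atTop 0] with T hT
  exact limsup_lintegral_le_one_add_iSup_setLIntegral hEmeas
    (ENNReal.tendsto_one_add_ofReal_add_ofReal_mul (htend P hP).1 (htend P hP).2
      ENNReal.ofReal_ne_top)
    (fun n => happrox P hP n T hT)

/-- If a sequence of asymptotic e-variables is uniformly integrable under each `P ∈ Unv`, then it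
is strongly asymptotic: `limsup_n E^P[Eⁿ] ≤ 1` for all `P ∈ Unv`. -/
theorem strongly_asymptotic_of_uniformly_integrable {Ω : Type*} [MeasurableSpace Ω]
    (Unv : Set (Measure Ω)) (hprob : ∀ P ∈ Unv, IsProbabilityMeasure P)
    (E : ℕ → Ω → ℝ≥0∞) (hEmeas : ∀ n, Measurable (E n))
    (ε δ : ℕ → Measure Ω → ℝ)
    (hε : ∀ n, ∀ P ∈ Unv, 0 ≤ ε n P) (hδ : ∀ n, ∀ P ∈ Unv, 0 ≤ δ n P ∧ δ n P ≤ 1)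
    (htend : ∀ P ∈ Unv, Tendsto (fun n => ε n P) atTop (nhds 0) ∧
      Tendsto (fun n => δ n P) atTop (nhds 0))
    (happrox : ∀ P ∈ Unv, ∀ n, ∀ t : ℝ, 0 ≤ t →
      ∫⁻ ω, min (E n ω) (ENNReal.ofReal t) ∂P ≤
        1 + ENNReal.ofReal (ε n P) + ENNReal.ofReal (δ n P) * ENNReal.ofReal t)
    (hui : ∀ P ∈ Unv, Tendsto
      (fun T : ℝ => ⨆ n, ∫⁻ ω in {ω | ENNReal.ofReal T ≤ E n ω}, E n ω ∂P)
      atTop (nhds 0)) :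
    ∀ P ∈ Unv, Filter.limsup (fun n => ∫⁻ ω, E n ω ∂P) atTop ≤ 1 :=
  strongly_asymptotic_of_uniformly_integrable_general Unv E hEmeas ε δ htend happrox hui
end

section
/- Let the e-BH procedure at level α be applied to compound e-variables E₁,…,E_K, rejecting the k* hypotheses with largest e-values where k* = max{k : k·E_[k]/K ≥ 1/α}. Then the false discovery rate is at most α: E^P[F/R] ≤ α for every P in the universe, where R is the number of rejections and F the number of rejected true nulls (with 0/0 = 0). -/
/-! The e-BH threshold `e k ≥ K/(α R)` says that on the rejection event for `k` the factor
`1/R` of the false discovery proportion is at most `α e k / K`. Summing over rejected nulls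
gives the pointwise bound `F/R ≤ (α/K) Σ_{null k} e k`, whose expectation is at most `α` by the
compound e-variable condition. -/

open MeasureTheory
open scoped ENNReal
open scoped Classical

/-- The number of rejections of the e-BH procedure at level `α` applied to e-values
`e : Fin K → ℝ≥0∞`: the largest `r ≤ K` such that at least `r` of the e-values satisfy
`e k ≥ K/(α r)` (written multiplicatively as `K ≤ e k * (α * r)`). -/
noncomputable def ebhNumRejections (K : ℕ) (α : ℝ≥0∞) (e : Fin K → ℝ≥0∞) : ℕ :=
  sSup {r : ℕ | r ≤ K ∧
    r ≤ (Finset.univ.filter (fun k => (K : ℝ≥0∞) ≤ e k * (α * r))).card}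

/-- The e-BH procedure rejects hypothesis `k` iff `e k ≥ K/(α R)` where `R` is the number of
rejections. -/
def ebhReject (K : ℕ) (α : ℝ≥0∞) (e : Fin K → ℝ≥0∞) (k : Fin K) : Prop :=
  (K : ℝ≥0∞) ≤ e k * (α * ebhNumRejections K α e)

lemma ENNReal.inv_le_div_of_le_mul {a b c : ℝ≥0∞} (ha : a ≠ 0) (ha' : a ≠ ∞)
    (h : a ≤ b * c) : c⁻¹ ≤ b / a := by
  rw [ENNReal.le_div_iff_mul_le (Or.inl ha) (Or.inl ha')]
  have hc : c ≠ 0 := by rintro rfl; simp_all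
  rcases eq_or_ne c ∞ with rfl | hc'
  · simp
  · rw [ENNReal.inv_mul_le_iff hc hc', mul_comm]
    exact h

lemma ENNReal.card_div_le_sum {ι : Type*} (s : Finset ι) (r : ℝ≥0∞) (f : ι → ℝ≥0∞)
    (h : ∀ i ∈ s, r⁻¹ ≤ f i) : (s.card : ℝ≥0∞) / r ≤ ∑ i ∈ s, f i := by
  rw [div_eq_mul_inv, ← nsmul_eq_mul, ← Finset.sum_const]
  exact Finset.sum_le_sum h

section EBH

variable {K : ℕ} {α : ℝ≥0∞} {e : Fin K → ℝ≥0∞}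

lemma ebhNumRejections_le_card_ebhReject :
    ebhNumRejections K α e ≤ (Finset.univ.filter (ebhReject K α e)).card := by
  have hmem : ebhNumRejections K α e ∈ {r : ℕ | r ≤ K ∧
      r ≤ (Finset.univ.filter (fun k => (K : ℝ≥0∞) ≤ e k * (α * r))).card} :=
    Nat.sSup_mem ⟨0, by simp⟩ ⟨K, fun _ hr => hr.1⟩
  convert hmem.2 using 3
  exact Iff.rfl

lemma inv_card_ebhReject_le {k : Fin K} (hk : ebhReject K α e k) :
    ((Finset.univ.filter (ebhReject K α e)).card : ℝ≥0∞)⁻¹ ≤ e k * α / K := by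
  have hK : (K : ℝ≥0∞) ≠ 0 := by exact_mod_cast (Fin.pos k).ne'
  refine ENNReal.inv_le_div_of_le_mul hK (ENNReal.natCast_ne_top K) ?_
  calc (K : ℝ≥0∞) ≤ e k * (α * ebhNumRejections K α e) := hk
    _ ≤ e k * (α * (Finset.univ.filter (ebhReject K α e)).card) := by
        gcongr; exact ebhNumRejections_le_card_ebhReject
    _ = e k * α * (Finset.univ.filter (ebhReject K α e)).card := by ring

lemma card_filter_ebhReject_div_le_sum (p : Fin K → Prop) :
    ((Finset.univ.filter (fun k => p k ∧ ebhReject K α e k)).card : ℝ≥0∞) /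
        (Finset.univ.filter (ebhReject K α e)).card ≤
      ∑ k ∈ Finset.univ.filter p, e k * α / K :=
  calc _ ≤ ∑ k ∈ Finset.univ.filter (fun k => p k ∧ ebhReject K α e k), e k * α / K :=
        ENNReal.card_div_le_sum _ _ _ fun _ hk =>
          inv_card_ebhReject_le (Finset.mem_filter.mp hk).2.2
    _ ≤ ∑ k ∈ Finset.univ.filter p, e k * α / K :=
        Finset.sum_le_sum_of_subset fun _ hk => by
          simp only [Finset.mem_filter] at hk ⊢
          exact ⟨hk.1, hk.2.1⟩

end EBH

theorem ebh_fdr_control_general {Ω : Type*} [MeasurableSpace Ω] {K : ℕ}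
    (H : Fin K → Set (Measure Ω)) (Unv : Set (Measure Ω))
    (α : ℝ≥0∞)
    (E : Fin K → Ω → ℝ≥0∞) (hEmeas : ∀ k, Measurable (E k))
    (hcompound : ∀ P ∈ Unv,
      ∑ k ∈ Finset.univ.filter (fun k => P ∈ H k), ∫⁻ ω, E k ω ∂P ≤ K) :
    ∀ P ∈ Unv,
      ∫⁻ ω,
        ((Finset.univ.filter
            (fun k => P ∈ H k ∧ ebhReject K α (fun j => E j ω) k)).card : ℝ≥0∞) /
        ((Finset.univ.filter
            (fun k => ebhReject K α (fun j => E j ω) k)).card : ℝ≥0∞) ∂P ≤ α := by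
  intro P hP
  calc _ ≤ ∫⁻ ω, ∑ k ∈ Finset.univ.filter (fun k => P ∈ H k), E k ω * α / K ∂P :=
        lintegral_mono fun ω => card_filter_ebhReject_div_le_sum (fun k => P ∈ H k)
    _ = ∑ k ∈ Finset.univ.filter (fun k => P ∈ H k), (∫⁻ ω, E k ω ∂P) * (α / K) := by
        simp only [mul_div_assoc]
        rw [lintegral_finsetSum _ fun k _ => (hEmeas k).mul_const _]
        exact Finset.sum_congr rfl fun k _ => lintegral_mul_const _ (hEmeas k)
    _ = (∑ k ∈ Finset.univ.filter (fun k => P ∈ H k), ∫⁻ ω, E k ω ∂P) * (α / K) :=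
        (Finset.sum_mul ..).symm
    _ ≤ K * (α / K) := by gcongr; exact hcompound P hP
    _ ≤ α := ENNReal.mul_div_le

/-- e-BH applied to compound e-variables controls the FDR at level `α`:
`E^P[F/R] ≤ α` for every `P` in the universe, with the convention `0/0 = 0`. -/
theorem ebh_fdr_control {Ω : Type*} [MeasurableSpace Ω] {K : ℕ}
    (H : Fin K → Set (Measure Ω)) (Unv : Set (Measure Ω))
    (hprob : ∀ P ∈ Unv, IsProbabilityMeasure P)
    (α : ℝ≥0∞) (hα0 : 0 < α) (hα1 : α ≤ 1)
    (E : Fin K → Ω → ℝ≥0∞) (hEmeas : ∀ k, Measurable (E k))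
    (hcompound : ∀ P ∈ Unv,
      ∑ k ∈ Finset.univ.filter (fun k => P ∈ H k), ∫⁻ ω, E k ω ∂P ≤ K) :
    ∀ P ∈ Unv,
      ∫⁻ ω,
        ((Finset.univ.filter
            (fun k => P ∈ H k ∧ ebhReject K α (fun j => E j ω) k)).card : ℝ≥0∞) /
        ((Finset.univ.filter
            (fun k => ebhReject K α (fun j => E j ω) k)).card : ℝ≥0∞) ∂P ≤ α :=
  ebh_fdr_control_general H Unv α E hEmeas hcompound
end

section
/- Let D be any multiple testing procedure with FDR at most α, i.e. E^P[Σ_{null k} V_k/(R_D ∨ 1)] ≤ α for all P ∈ P, where V_k indicates rejection of hypothesis k and R_D = Σ_k V_k. Define E_k := (K/α)·V_k/(R_D ∨ 1). Then E₁,…,E_K are compound e-variables (Σ_{null k} E^P[E_k] ≤ K for all P ∈ P), and the e-BH procedure at level α applied to E₁,…,E_K rejects exactly the same hypotheses as D. -/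
open MeasureTheory
open scoped ENNReal
open scoped Classical

lemma ebh_pointwise {K : ℕ} {α : ℝ≥0∞} (hα0 : α ≠ 0) (hαtop : α ≠ ⊤)
    (W : Fin K → Prop) (k : Fin K) :
    ebhReject K α
      (fun j => (K : ℝ≥0∞) / α * (if W j then 1 else 0) /
        (max ((Finset.univ.filter (fun i => W i)).card : ℝ≥0∞) 1)) k ↔ W k := by
  have hK : 0 < K := k.pos
  have hKne : (K : ℝ≥0∞) ≠ 0 := by exact_mod_cast hK.ne'
  have hKtop : (K : ℝ≥0∞) ≠ ⊤ := ENNReal.natCast_ne_top K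
  set R : ℕ := (Finset.univ.filter (fun i => W i)).card with hRdef
  set M : ℝ≥0∞ := max (R : ℝ≥0∞) 1 with hMdef
  have hMcast : M = ((max R 1 : ℕ) : ℝ≥0∞) := by rw [hMdef, Nat.mono_cast.map_max, Nat.cast_one]
  have hM0 : M ≠ 0 := by simp [hMdef]
  have hMtop : M ≠ ⊤ := by
    rw [hMcast]; exact ENNReal.natCast_ne_top _
  set e : Fin K → ℝ≥0∞ := fun j => (K : ℝ≥0∞) / α * (if W j then 1 else 0) / M with hedef
  have hRK : R ≤ K := le_trans (Finset.card_filter_le _ _) (by simp)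
  -- key condition characterization
  have hcond : ∀ (r : ℕ) (j : Fin K),
      ((K : ℝ≥0∞) ≤ e j * (α * r)) ↔ (W j ∧ max R 1 ≤ r) := by
    intro r j
    by_cases hW : W j
    · have hmul : e j * (α * r) = (K : ℝ≥0∞) * r / M := by
        have : e j * (α * r) = ((K : ℝ≥0∞) * r / M) * (α⁻¹ * α) := by
          simp only [hedef, if_pos hW, div_eq_mul_inv]
          ring
        rw [this, ENNReal.inv_mul_cancel hα0 hαtop, mul_one]
      rw [hmul]
      have h1 : (K : ℝ≥0∞) ≤ (K : ℝ≥0∞) * r / M ↔ (K : ℝ≥0∞) * M ≤ (K : ℝ≥0∞) * r :=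
        ENNReal.le_div_iff_mul_le (Or.inl hM0) (Or.inl hMtop)
      rw [h1, ENNReal.mul_le_mul_iff_right hKne hKtop, hMcast, Nat.cast_le]
      simp [hW]
    · simp only [hedef, if_neg hW, mul_zero, ENNReal.zero_div, zero_mul]
      simp [hW, hKne, (zero_lt_iff.mpr hKne).not_ge]
  -- the filter cards
  have hcard : ∀ r : ℕ,
      (Finset.univ.filter (fun j => (K : ℝ≥0∞) ≤ e j * (α * r))).card
        = if max R 1 ≤ r then R else 0 := by
    intro r
    by_cases hr : max R 1 ≤ r
    · rw [if_pos hr, hRdef]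
      congr 1
      apply Finset.filter_congr
      intro j _
      simp [hcond r j, hr]
    · rw [if_neg hr]
      rw [Finset.card_eq_zero, Finset.filter_eq_empty_iff]
      intro j _
      rw [hcond r j]
      tauto
  -- compute the number of rejections
  have hN : ebhNumRejections K α e = R := by
    have hmem : R ∈ {r : ℕ | r ≤ K ∧
        r ≤ (Finset.univ.filter (fun j => (K : ℝ≥0∞) ≤ e j * (α * r))).card} := by
      refine ⟨hRK, ?_⟩
      rw [hcard R]
      rcases Nat.eq_zero_or_pos R with h0 | h0
      · simp [h0]
      · rw [if_pos (by omega)]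
    have hub : ∀ r ∈ {r : ℕ | r ≤ K ∧
        r ≤ (Finset.univ.filter (fun j => (K : ℝ≥0∞) ≤ e j * (α * r))).card}, r ≤ R := by
      intro r hr
      by_contra hlt
      push_neg at hlt
      have := hr.2
      rw [hcard r, if_pos (by omega)] at this
      omega
    exact le_antisymm (csSup_le ⟨R, hmem⟩ hub) (le_csSup ⟨K, fun r hr => hr.1⟩ hmem)
  unfold ebhReject
  rw [hN, hcond R k]
  constructor
  · exact fun h => h.1
  · intro hW
    refine ⟨hW, ?_⟩
    have : 0 < R := Finset.card_pos.mpr ⟨k, by simp [hW]⟩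
    omega

/-- Universality of e-BH: given any procedure `V` with FDR at most `α`, the implied variables
`E_k := (K/α)·V_k/(R ∨ 1)` are compound e-variables, and e-BH at level `α` applied to them
rejects exactly the same hypotheses as the original procedure. -/
theorem ebh_universality {Ω : Type*} [MeasurableSpace Ω] {K : ℕ}
    (H : Fin K → Set (Measure Ω)) (Unv : Set (Measure Ω))
    (hprob : ∀ P ∈ Unv, IsProbabilityMeasure P)
    (α : ℝ≥0∞) (hα0 : 0 < α) (hαtop : α ≠ ⊤)
    (V : Fin K → Ω → Prop)
    (hfdr : ∀ P ∈ Unv,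
      ∫⁻ ω, ((Finset.univ.filter (fun k => P ∈ H k ∧ V k ω)).card : ℝ≥0∞) /
        (max ((Finset.univ.filter (fun k => V k ω)).card : ℝ≥0∞) 1) ∂P ≤ α) :
    (∀ P ∈ Unv,
      ∑ k ∈ Finset.univ.filter (fun k => P ∈ H k),
        ∫⁻ ω, (K : ℝ≥0∞) / α * (if V k ω then 1 else 0) /
          (max ((Finset.univ.filter (fun j => V j ω)).card : ℝ≥0∞) 1) ∂P ≤ K) ∧
    (∀ ω : Ω, ∀ k : Fin K,
      ebhReject K α
        (fun j => (K : ℝ≥0∞) / α * (if V j ω then 1 else 0) /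
          (max ((Finset.univ.filter (fun i => V i ω)).card : ℝ≥0∞) 1)) k ↔ V k ω) := by
  have hαne : α ≠ 0 := hα0.ne'
  constructor
  · intro P hP
    -- superadditivity of the lower integral
    have hsum : ∀ (s : Finset (Fin K)) (f : Fin K → Ω → ℝ≥0∞),
        ∑ k ∈ s, ∫⁻ ω, f k ω ∂P ≤ ∫⁻ ω, ∑ k ∈ s, f k ω ∂P := by
      intro s f
      induction s using Finset.induction_on with
      | empty => simp
      | @insert a s' h ih =>
        rw [Finset.sum_insert h]
        calc ∫⁻ ω, f a ω ∂P + ∑ k ∈ s', ∫⁻ ω, f k ω ∂P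
            ≤ ∫⁻ ω, f a ω ∂P + ∫⁻ ω, ∑ k ∈ s', f k ω ∂P := add_le_add_right ih _
          _ ≤ ∫⁻ ω, f a ω + ∑ k ∈ s', f k ω ∂P := le_lintegral_add _ _
          _ = ∫⁻ ω, ∑ k ∈ insert a s', f k ω ∂P := by
              simp [Finset.sum_insert h]
    refine le_trans (hsum _ _) ?_
    have hpt : ∀ ω : Ω,
        ∑ k ∈ Finset.univ.filter (fun k => P ∈ H k),
          (K : ℝ≥0∞) / α * (if V k ω then 1 else 0) /
            (max ((Finset.univ.filter (fun j => V j ω)).card : ℝ≥0∞) 1)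
        = (K : ℝ≥0∞) / α *
          (((Finset.univ.filter (fun k => P ∈ H k ∧ V k ω)).card : ℝ≥0∞) /
            (max ((Finset.univ.filter (fun j => V j ω)).card : ℝ≥0∞) 1)) := by
      intro ω
      simp only [div_eq_mul_inv]
      rw [← Finset.sum_mul, ← Finset.mul_sum, Finset.sum_boole, Finset.filter_filter, mul_assoc]
    calc ∫⁻ ω, ∑ k ∈ Finset.univ.filter (fun k => P ∈ H k),
          (K : ℝ≥0∞) / α * (if V k ω then 1 else 0) /
            (max ((Finset.univ.filter (fun j => V j ω)).card : ℝ≥0∞) 1) ∂P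
        = ∫⁻ ω, (K : ℝ≥0∞) / α *
          (((Finset.univ.filter (fun k => P ∈ H k ∧ V k ω)).card : ℝ≥0∞) /
            (max ((Finset.univ.filter (fun j => V j ω)).card : ℝ≥0∞) 1)) ∂P := by
          exact lintegral_congr hpt
      _ = (K : ℝ≥0∞) / α * ∫⁻ ω,
          ((Finset.univ.filter (fun k => P ∈ H k ∧ V k ω)).card : ℝ≥0∞) /
            (max ((Finset.univ.filter (fun j => V j ω)).card : ℝ≥0∞) 1) ∂P :=
          lintegral_const_mul' _ _ (by
            simp [ENNReal.div_eq_top, hαne, ENNReal.natCast_ne_top])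
      _ ≤ (K : ℝ≥0∞) / α * α := by
          exact mul_le_mul_right (hfdr P hP) _
      _ = (K : ℝ≥0∞) := ENNReal.div_mul_cancel hαne hαtop
  · intro ω k
    exact ebh_pointwise hαne hαtop (fun j => V j ω) k
end

section
/- Let p₁°,…,p_K° and q₁°,…,q_K° be probability densities on a measurable space X with respect to a σ-finite measure ν, and define s(x) = (Σ_j q_j°(x)) / (Σ_j p_j°(x)). Then for every subset S of {1,…,K}, Σ_{k ∈ S} ∫ s(x) p_k°(x) ν(dx) ≤ K. In particular, if X_k has density p_k° under the null, then s(X₁),…,s(X_K) are compound e-variables. -/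
open MeasureTheory
open scoped ENNReal

/-- Optimal discovery compound e-values: with null densities `p_k` and alternative densities
`q_k` with respect to a σ-finite measure `ν`, the mixture likelihood ratio
`s(x) = (Σ_j q_j(x))/(Σ_j p_j(x))` satisfies `Σ_{k ∈ S} ∫ s·p_k dν ≤ K` for any subset `S`;
in particular, if `X_k` has density `p_k` under the null, `s(X₁),…,s(X_K)` are compound
e-variables. -/
theorem optimal_discovery_compound_evalues {X : Type*} [MeasurableSpace X]
    (ν : Measure X) [SigmaFinite ν] {K : ℕ}
    (p q : Fin K → X → ℝ≥0∞)
    (hpmeas : ∀ k, Measurable (p k)) (hqmeas : ∀ k, Measurable (q k))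
    (hp : ∀ k, ∫⁻ x, p k x ∂ν = 1) (hq : ∀ k, ∫⁻ x, q k x ∂ν = 1)
    (S : Finset (Fin K)) :
    ∑ k ∈ S, ∫⁻ x, ((∑ j, q j x) / (∑ j, p j x)) * p k x ∂ν ≤ K := by
  calc ∑ k ∈ S, ∫⁻ x, ((∑ j, q j x) / (∑ j, p j x)) * p k x ∂ν
      = ∫⁻ x, ∑ k ∈ S, ((∑ j, q j x) / (∑ j, p j x)) * p k x ∂ν := by
        rw [lintegral_finset_sum]
        intro k _
        exact (((Finset.measurable_sum _ fun j _ => hqmeas j).div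
          (Finset.measurable_sum _ fun j _ => hpmeas j)).mul (hpmeas k))
    _ ≤ ∫⁻ x, ∑ j, q j x ∂ν := by
        refine lintegral_mono fun x => ?_
        rw [← Finset.mul_sum]
        calc ((∑ j, q j x) / (∑ j, p j x)) * ∑ k ∈ S, p k x
            ≤ ((∑ j, q j x) / (∑ j, p j x)) * ∑ j, p j x := by
              exact mul_le_mul_right
                (Finset.sum_le_sum_of_subset (Finset.subset_univ S)) _
          _ ≤ ∑ j, q j x := by
              rw [mul_comm]; exact ENNReal.mul_div_le
    _ = ∑ j : Fin K, ∫⁻ x, q j x ∂ν := lintegral_finset_sum _ fun j _ => hqmeas j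
    _ = K := by simp [hq]
end
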